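/- Let μ₁,…,μ_J be probability measures on ℝ with finite second moments and quantile functions F₁^{-1},…,F_J^{-1}. Then the probability measure μ_B with quantile function F_B^{-1}(t) = (1/J)∑_{k=1}^J F_k^{-1}(t) minimizes η ↦ (1/J)∑_{j=1}^J W₂²(μ_j, η) over all probability measures η on ℝ with finite second moment. -/

import Mathlib

/-!
On the line, the comonotone coupling `t ↦ (F₁⁻¹ t, F₂⁻¹ t)`, with `t` uniform on `(0, 1)`, is an
optimal coupling for the quadratic cost. All couplings of `ν₁` and `ν₂` have the same second
moments, so only `∫ x y` matters, and Hoeffding's identity writes `∫ x y dρ` as the integral over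
`(s, t)` of `ρ (Ioi s ×ˢ Ioi t)` plus terms depending on the marginals alone. The comonotone
coupling attains the Fréchet–Hoeffding bound `ρ (Ioi s ×ˢ Ioi t) ≤ min (ν₁ (Ioi s)) (ν₂ (Ioi t))`
for every `(s, t)`, hence maximizes `∫ x y`. Thus `W₂²(ν₁, ν₂) = ∫₀¹ (F₁⁻¹ - F₂⁻¹)²`, and the
barycenter problem decouples in `t` into minimizing `∑ⱼ (Fⱼ⁻¹ t - c)²` over `c`, which the mean
does.
-/

open MeasureTheory

noncomputable section

/-- Squared 2-Wasserstein distance on ℝ: infimum over couplings of ∫ (x-y)² dπ. -/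
def W2sq (μ ν : Measure ℝ) : ℝ :=
  sInf { c | ∃ π : Measure (ℝ × ℝ), IsProbabilityMeasure π ∧
    π.map Prod.fst = μ ∧ π.map Prod.snd = ν ∧
    c = ∫ p, (p.1 - p.2) ^ 2 ∂π }

/-- Quantile function: F⁻¹(t) = inf {x : F(x) ≥ t}. -/
def quantile (μ : Measure ℝ) (t : ℝ) : ℝ :=
  sInf { x | ENNReal.ofReal t ≤ μ (Set.Iic x) }

open Set ProbabilityTheory

lemma StieltjesFunction.le_apply_sInf_setOf_le (f : StieltjesFunction ℝ) {t : ℝ}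
    (hne : {x | t ≤ f x}.Nonempty) : t ≤ f (sInf {x | t ≤ f x}) := by
  refine ge_of_tendsto ((f.right_continuous _).mono Ioi_subset_Ici_self).tendsto ?_
  filter_upwards [self_mem_nhdsWithin] with x hx
  obtain ⟨y, hy, hyx⟩ := exists_lt_of_csInf_lt hne hx
  exact hy.trans (f.mono hyx.le)

lemma MeasureTheory.Measure.ext_of_Ioi_of_isProbabilityMeasure {μ ν : Measure ℝ}
    [IsProbabilityMeasure μ] [IsProbabilityMeasure ν] (h : ∀ x, μ (Ioi x) = ν (Ioi x)) :
    μ = ν := by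
  refine Measure.ext_of_Iic μ ν fun x => ?_
  rw [← compl_Ioi, prob_compl_eq_one_sub measurableSet_Ioi,
    prob_compl_eq_one_sub measurableSet_Ioi, h]

def unitUniform : Measure ℝ := volume.restrict (Ioo 0 1)

instance : IsProbabilityMeasure unitUniform :=
  ⟨by simp [unitUniform]⟩

section Quantile

variable {ν : Measure ℝ} [IsProbabilityMeasure ν]

lemma measure_Ioi_eq_ofReal_one_sub_cdf (x : ℝ) : ν (Ioi x) = ENNReal.ofReal (1 - cdf ν x) := by
  rw [← ofReal_measureReal, ← compl_Iic, probReal_compl_eq_one_sub measurableSet_Iic, cdf_eq_real]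

lemma quantile_eq_sInf_cdf (t : ℝ) : quantile ν t = sInf {x | t ≤ cdf ν x} := by
  simp_rw [quantile, ← ofReal_cdf, ENNReal.ofReal_le_ofReal_iff (cdf_nonneg ν _)]

lemma quantile_le_iff {t x : ℝ} (ht : t ∈ Ioo 0 1) : quantile ν t ≤ x ↔ t ≤ cdf ν x := by
  rw [quantile_eq_sInf_cdf]
  have hne : {x | t ≤ cdf ν x}.Nonempty := ((tendsto_cdf_atTop ν).eventually_const_le ht.2).exists
  have hbdd : BddBelow {x | t ≤ cdf ν x} := by
    obtain ⟨b, hb⟩ := ((tendsto_cdf_atBot ν).eventually_lt_const ht.1).exists_forall_of_atBot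
    exact ⟨b, fun y hy => not_lt.1 fun hyb => (hb y hyb.le).not_ge hy⟩
  exact ⟨fun h => ((cdf ν).le_apply_sInf_setOf_le hne).trans ((cdf ν).mono h),
    fun h => csInf_le hbdd h⟩

lemma monotoneOn_quantile : MonotoneOn (quantile ν) (Ioo 0 1) := fun _ ha _ hb hab =>
  (quantile_le_iff ha).2 <| hab.trans <| (quantile_le_iff hb).1 le_rfl

lemma Ioo_inter_preimage_quantile_Ioi (x : ℝ) :
    Ioo 0 1 ∩ quantile ν ⁻¹' Ioi x = Ioo (cdf ν x) 1 := by
  ext t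
  simp only [mem_inter_iff, mem_preimage, mem_Ioi, mem_Ioo]
  constructor
  · rintro ⟨ht, hx⟩
    exact ⟨not_le.1 fun h => hx.not_ge ((quantile_le_iff ht).2 h), ht.2⟩
  · rintro ⟨hx, ht1⟩
    have ht : t ∈ Ioo 0 1 := ⟨(cdf_nonneg ν x).trans_lt hx, ht1⟩
    exact ⟨ht, not_le.1 fun h => hx.not_ge ((quantile_le_iff ht).1 h)⟩

lemma aemeasurable_quantile : AEMeasurable (quantile ν) unitUniform :=
  aemeasurable_restrict_of_monotoneOn measurableSet_Ioo monotoneOn_quantile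

lemma unitUniform_map_quantile : unitUniform.map (quantile ν) = ν := by
  have := Measure.isProbabilityMeasure_map (μ := unitUniform) (aemeasurable_quantile (ν := ν))
  refine Measure.ext_of_Ioi_of_isProbabilityMeasure fun x => ?_
  rw [Measure.map_apply_of_aemeasurable aemeasurable_quantile measurableSet_Ioi, unitUniform,
    Measure.restrict_apply' measurableSet_Ioo, inter_comm, Ioo_inter_preimage_quantile_Ioi,
    Real.volume_Ioo, measure_Ioi_eq_ofReal_one_sub_cdf]

end Quantile

def quantileCoupling (ν₁ ν₂ : Measure ℝ) : Measure (ℝ × ℝ) :=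
  unitUniform.map fun t => (quantile ν₁ t, quantile ν₂ t)

section QuantileCoupling

variable {ν₁ ν₂ : Measure ℝ} [IsProbabilityMeasure ν₁] [IsProbabilityMeasure ν₂]

lemma aemeasurable_quantile_prodMk :
    AEMeasurable (fun t => (quantile ν₁ t, quantile ν₂ t)) unitUniform :=
  aemeasurable_quantile.prodMk aemeasurable_quantile

instance : IsProbabilityMeasure (quantileCoupling ν₁ ν₂) :=
  Measure.isProbabilityMeasure_map aemeasurable_quantile_prodMk

lemma quantileCoupling_map_fst : (quantileCoupling ν₁ ν₂).map Prod.fst = ν₁ := by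
  rw [quantileCoupling, AEMeasurable.map_map_of_aemeasurable measurable_fst.aemeasurable
    aemeasurable_quantile_prodMk]
  exact unitUniform_map_quantile

lemma quantileCoupling_map_snd : (quantileCoupling ν₁ ν₂).map Prod.snd = ν₂ := by
  rw [quantileCoupling, AEMeasurable.map_map_of_aemeasurable measurable_snd.aemeasurable
    aemeasurable_quantile_prodMk]
  exact unitUniform_map_quantile

lemma quantileCoupling_Ioi_prod_Ioi (s t : ℝ) :
    quantileCoupling ν₁ ν₂ (Ioi s ×ˢ Ioi t) = min (ν₁ (Ioi s)) (ν₂ (Ioi t)) := by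
  have hpre : Ioo 0 1 ∩ (fun u => (quantile ν₁ u, quantile ν₂ u)) ⁻¹' (Ioi s ×ˢ Ioi t) =
      Ioo (max (cdf ν₁ s) (cdf ν₂ t)) 1 := by
    rw [mk_preimage_prod, inter_inter_distrib_left, Ioo_inter_preimage_quantile_Ioi,
      Ioo_inter_preimage_quantile_Ioi, Ioo_inter_Ioo, min_self]
  rw [quantileCoupling, Measure.map_apply_of_aemeasurable aemeasurable_quantile_prodMk
    (measurableSet_Ioi.prod measurableSet_Ioi), unitUniform, Measure.restrict_apply'
    measurableSet_Ioo, inter_comm, hpre, Real.volume_Ioo, measure_Ioi_eq_ofReal_one_sub_cdf,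
    measure_Ioi_eq_ofReal_one_sub_cdf, ← ENNReal.ofReal_min, min_sub_sub_left]

end QuantileCoupling

-- Signed layer cake: `a = ∫ s, layer s a`, hence `x * y = ∬ layer s x * layer t y ds dt`.
def layer (s a : ℝ) : ℝ := (if s < a then 1 else 0) - if s < 0 then 1 else 0

lemma measurable_layer : Measurable (Function.uncurry layer) := by
  unfold layer
  exact (Measurable.ite (measurableSet_lt measurable_fst measurable_snd) measurable_const
    measurable_const).sub
    (Measurable.ite (measurableSet_lt measurable_fst measurable_const) measurable_const
      measurable_const)

lemma layer_eq_indicator_sub_indicator (s a : ℝ) :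
    layer s a = (Ico 0 a).indicator 1 s - (Ico a 0).indicator 1 s := by
  simp only [layer, indicator, mem_Ico, Pi.one_apply]
  split_ifs <;> grind

lemma abs_layer (s a : ℝ) :
    |layer s a| = (Ico 0 a).indicator 1 s + (Ico a 0).indicator 1 s := by
  simp only [layer, indicator, mem_Ico, Pi.one_apply]
  split_ifs <;> grind

lemma integrable_indicator_one_Ico (b c : ℝ) : Integrable ((Ico b c).indicator (1 : ℝ → ℝ)) :=
  (integrable_indicator_iff measurableSet_Ico).2 (integrableOn_const measure_Ico_lt_top.ne)

lemma integrable_layer (a : ℝ) : Integrable (layer · a) := by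
  simp_rw [layer_eq_indicator_sub_indicator]
  exact (integrable_indicator_one_Ico 0 a).sub (integrable_indicator_one_Ico a 0)

lemma integral_layer (a : ℝ) : ∫ s, layer s a = a := by
  simp_rw [layer_eq_indicator_sub_indicator]
  rw [integral_sub (integrable_indicator_one_Ico 0 a) (integrable_indicator_one_Ico a 0),
    integral_indicator_one measurableSet_Ico, integral_indicator_one measurableSet_Ico,
    Real.volume_real_Ico, Real.volume_real_Ico, sub_zero, zero_sub,
    max_zero_sub_max_neg_zero_eq_self]

lemma integral_abs_layer (a : ℝ) : ∫ s, |layer s a| = |a| := by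
  simp_rw [abs_layer]
  rw [integral_add (integrable_indicator_one_Ico 0 a) (integrable_indicator_one_Ico a 0),
    integral_indicator_one measurableSet_Ico, integral_indicator_one measurableSet_Ico,
    Real.volume_real_Ico, Real.volume_real_Ico, sub_zero, zero_sub,
    max_zero_add_max_neg_zero_eq_abs_self]

lemma integrable_layer_mul_layer (a b : ℝ) :
    Integrable (fun st : ℝ × ℝ => layer st.1 a * layer st.2 b) :=
  (integrable_layer a).mul_prod (integrable_layer b)

lemma integral_layer_mul_layer (a b : ℝ) : ∫ st : ℝ × ℝ, layer st.1 a * layer st.2 b = a * b := by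
  rw [Measure.volume_eq_prod, integral_prod_mul (layer · a) (layer · b), integral_layer,
    integral_layer]

lemma integral_norm_layer_mul_layer (a b : ℝ) :
    ∫ st : ℝ × ℝ, ‖layer st.1 a * layer st.2 b‖ = ‖a * b‖ := by
  simp_rw [norm_mul, Real.norm_eq_abs]
  rw [Measure.volume_eq_prod, integral_prod_mul (|layer · a|) (|layer · b|), integral_abs_layer,
    integral_abs_layer]

section Hoeffding

variable {ρ : Measure (ℝ × ℝ)}

lemma integrable_layer_kernel [SFinite ρ] (h : Integrable (fun p => p.1 * p.2) ρ) :
    Integrable (Function.uncurry fun (p st : ℝ × ℝ) => layer st.1 p.1 * layer st.2 p.2)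
      (ρ.prod volume) := by
  have hmeas :
      Measurable (Function.uncurry fun (p st : ℝ × ℝ) => layer st.1 p.1 * layer st.2 p.2) :=
    (measurable_layer.comp ((measurable_fst.comp measurable_snd).prodMk
      (measurable_fst.comp measurable_fst))).mul
    (measurable_layer.comp ((measurable_snd.comp measurable_snd).prodMk
      (measurable_snd.comp measurable_fst)))
  refine (integrable_prod_iff hmeas.aestronglyMeasurable).2
    ⟨.of_forall fun p => integrable_layer_mul_layer p.1 p.2, ?_⟩
  simpa only [Function.uncurry_apply_pair, integral_norm_layer_mul_layer] using h.norm

lemma integral_mul_eq_integral_integral_layer [SFinite ρ] (h : Integrable (fun p => p.1 * p.2) ρ) :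
    ∫ p, p.1 * p.2 ∂ρ = ∫ st : ℝ × ℝ, ∫ p : ℝ × ℝ, layer st.1 p.1 * layer st.2 p.2 ∂ρ := by
  calc ∫ p, p.1 * p.2 ∂ρ = ∫ p : ℝ × ℝ, (∫ st : ℝ × ℝ, layer st.1 p.1 * layer st.2 p.2) ∂ρ :=
        integral_congr_ae (.of_forall fun p => (integral_layer_mul_layer p.1 p.2).symm)
    _ = _ := integral_integral_swap (integrable_layer_kernel h)

lemma integral_layer_mul_layer_eq_measureReal [IsFiniteMeasure ρ] (s t : ℝ) :
    ∫ p, layer s p.1 * layer t p.2 ∂ρ =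
      ρ.real (Ioi s ×ˢ Ioi t) - (if t < 0 then 1 else 0) * (ρ.map Prod.fst).real (Ioi s)
        - (if s < 0 then 1 else 0) * (ρ.map Prod.snd).real (Ioi t)
        + (if s < 0 then 1 else 0) * (if t < 0 then 1 else 0) * ρ.real univ := by
  set a : ℝ := if s < 0 then 1 else 0
  set b : ℝ := if t < 0 then 1 else 0
  have hS : MeasurableSet (Ioi s ×ˢ Ioi t) := measurableSet_Ioi.prod measurableSet_Ioi
  have h₁ : MeasurableSet (Prod.fst ⁻¹' Ioi s : Set (ℝ × ℝ)) := measurable_fst measurableSet_Ioi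
  have h₂ : MeasurableSet (Prod.snd ⁻¹' Ioi t : Set (ℝ × ℝ)) := measurable_snd measurableSet_Ioi
  have hexpand : (fun p : ℝ × ℝ => layer s p.1 * layer t p.2) = fun p =>
      (Ioi s ×ˢ Ioi t).indicator 1 p - b * (Prod.fst ⁻¹' Ioi s).indicator 1 p
        - a * (Prod.snd ⁻¹' Ioi t).indicator 1 p + a * b := by
    ext p
    simp only [layer, indicator, mem_prod, mem_preimage, mem_Ioi, Pi.one_apply, a, b]
    split_ifs <;> grind
  have hint (S : Set (ℝ × ℝ)) (hS : MeasurableSet S) :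
      Integrable (S.indicator (1 : ℝ × ℝ → ℝ)) ρ :=
    (integrable_const (1 : ℝ)).indicator hS
  have h0 := hint _ hS
  have h1 := (hint _ h₁).const_mul b
  have h2 := (hint _ h₂).const_mul a
  rw [hexpand, integral_add, integral_sub, integral_sub, integral_const_mul, integral_const_mul,
    integral_indicator_one hS, integral_indicator_one h₁, integral_indicator_one h₂,
    integral_const, map_measureReal_apply measurable_fst measurableSet_Ioi,
    map_measureReal_apply measurable_snd measurableSet_Ioi, smul_eq_mul, mul_comm (a * b)]
  exacts [h0, h1, h0.sub h1, h2, (h0.sub h1).sub h2, integrable_const _]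

lemma integral_mul_le_of_measure_Ioi_prod_Ioi_le {ρ' : Measure (ℝ × ℝ)} [IsFiniteMeasure ρ]
    [IsFiniteMeasure ρ'] (hfst : ρ.map Prod.fst = ρ'.map Prod.fst)
    (hsnd : ρ.map Prod.snd = ρ'.map Prod.snd) (h : Integrable (fun p => p.1 * p.2) ρ)
    (h' : Integrable (fun p => p.1 * p.2) ρ')
    (hle : ∀ s t, ρ (Ioi s ×ˢ Ioi t) ≤ ρ' (Ioi s ×ˢ Ioi t)) :
    ∫ p, p.1 * p.2 ∂ρ ≤ ∫ p, p.1 * p.2 ∂ρ' := by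
  have huniv : ρ.real univ = ρ'.real univ := by
    rw [← preimage_univ (f := Prod.fst), ← map_measureReal_apply measurable_fst .univ,
      ← map_measureReal_apply measurable_fst .univ, hfst]
  rw [integral_mul_eq_integral_integral_layer h, integral_mul_eq_integral_integral_layer h']
  refine integral_mono (integrable_layer_kernel h).integral_prod_right
    (integrable_layer_kernel h').integral_prod_right fun st => ?_
  simp only [integral_layer_mul_layer_eq_measureReal, hfst, hsnd, huniv]
  gcongr
  exact ENNReal.toReal_mono (measure_ne_top _ _) (hle _ _)

end Hoeffding

lemma measure_prod_le_min_map {α β : Type*} [MeasurableSpace α] [MeasurableSpace β]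
    (ρ : Measure (α × β)) {A : Set α} {B : Set β} (hA : MeasurableSet A) (hB : MeasurableSet B) :
    ρ (A ×ˢ B) ≤ min (ρ.map Prod.fst A) (ρ.map Prod.snd B) := by
  rw [Measure.map_apply measurable_fst hA, Measure.map_apply measurable_snd hB]
  exact le_min (measure_mono (prod_subset_preimage_fst _ _))
    (measure_mono (prod_subset_preimage_snd _ _))

section SecondMoments

variable {ρ : Measure (ℝ × ℝ)}

lemma integrable_fst_sq (h : Integrable (fun x => x ^ 2) (ρ.map Prod.fst)) :
    Integrable (fun p : ℝ × ℝ => p.1 ^ 2) ρ :=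
  h.comp_measurable measurable_fst

lemma integrable_snd_sq (h : Integrable (fun x => x ^ 2) (ρ.map Prod.snd)) :
    Integrable (fun p : ℝ × ℝ => p.2 ^ 2) ρ :=
  h.comp_measurable measurable_snd

variable (h₁ : Integrable (fun x => x ^ 2) (ρ.map Prod.fst))
  (h₂ : Integrable (fun x => x ^ 2) (ρ.map Prod.snd))
include h₁ h₂

lemma integrable_fst_mul_snd : Integrable (fun p : ℝ × ℝ => p.1 * p.2) ρ := by
  refine ((integrable_fst_sq h₁).add (integrable_snd_sq h₂)).mono'
    (measurable_fst.mul measurable_snd).aestronglyMeasurable (.of_forall fun p => ?_)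
  rw [Pi.add_apply, Real.norm_eq_abs, abs_mul]
  nlinarith [sq_nonneg (|p.1| - |p.2|), sq_abs p.1, sq_abs p.2]

lemma integral_sub_sq_eq :
    ∫ p : ℝ × ℝ, (p.1 - p.2) ^ 2 ∂ρ =
      ∫ x, x ^ 2 ∂(ρ.map Prod.fst) + ∫ x, x ^ 2 ∂(ρ.map Prod.snd) - 2 * ∫ p, p.1 * p.2 ∂ρ := by
  have hsq : Measurable (fun x : ℝ => x ^ 2) := by fun_prop
  rw [integral_map measurable_fst.aemeasurable hsq.aestronglyMeasurable,
    integral_map measurable_snd.aemeasurable hsq.aestronglyMeasurable, ← integral_const_mul,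
    ← integral_add (integrable_fst_sq h₁) (integrable_snd_sq h₂),
    ← integral_sub]
  · exact integral_congr_ae (.of_forall fun p => by ring)
  · exact (integrable_fst_sq h₁).add (integrable_snd_sq h₂)
  · exact (integrable_fst_mul_snd h₁ h₂).const_mul 2

lemma integrable_sub_sq : Integrable (fun p : ℝ × ℝ => (p.1 - p.2) ^ 2) ρ :=
  (((integrable_fst_sq h₁).add (integrable_snd_sq h₂)).sub
    ((integrable_fst_mul_snd h₁ h₂).const_mul 2)).congr
    (.of_forall fun p => by simp only [Pi.add_apply, Pi.sub_apply]; ring)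

end SecondMoments

section Optimality

variable {ν₁ ν₂ : Measure ℝ} [IsProbabilityMeasure ν₁] [IsProbabilityMeasure ν₂]
  (hm₁ : Integrable (fun x => x ^ 2) ν₁) (hm₂ : Integrable (fun x => x ^ 2) ν₂)
include hm₁ hm₂

lemma integral_sub_sq_quantileCoupling_le {ρ : Measure (ℝ × ℝ)} [IsFiniteMeasure ρ]
    (h₁ : ρ.map Prod.fst = ν₁) (h₂ : ρ.map Prod.snd = ν₂) :
    ∫ p, (p.1 - p.2) ^ 2 ∂(quantileCoupling ν₁ ν₂) ≤ ∫ p, (p.1 - p.2) ^ 2 ∂ρ := by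
  have hQ₁ := quantileCoupling_map_fst (ν₁ := ν₁) (ν₂ := ν₂)
  have hQ₂ := quantileCoupling_map_snd (ν₁ := ν₁) (ν₂ := ν₂)
  have hρ₁ : Integrable (fun x => x ^ 2) (ρ.map Prod.fst) := by rwa [h₁]
  have hρ₂ : Integrable (fun x => x ^ 2) (ρ.map Prod.snd) := by rwa [h₂]
  have hQm₁ : Integrable (fun x => x ^ 2) ((quantileCoupling ν₁ ν₂).map Prod.fst) := by rwa [hQ₁]
  have hQm₂ : Integrable (fun x => x ^ 2) ((quantileCoupling ν₁ ν₂).map Prod.snd) := by rwa [hQ₂]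
  have hmul := integral_mul_le_of_measure_Ioi_prod_Ioi_le (h₁.trans hQ₁.symm) (h₂.trans hQ₂.symm)
    (integrable_fst_mul_snd hρ₁ hρ₂) (integrable_fst_mul_snd hQm₁ hQm₂) fun s t => by
      rw [quantileCoupling_Ioi_prod_Ioi, ← h₁, ← h₂]
      exact measure_prod_le_min_map ρ measurableSet_Ioi measurableSet_Ioi
  rw [integral_sub_sq_eq hQm₁ hQm₂, integral_sub_sq_eq hρ₁ hρ₂, hQ₁, hQ₂, h₁, h₂]
  linarith

lemma integrable_quantile_sub_sq :
    Integrable (fun t => (quantile ν₁ t - quantile ν₂ t) ^ 2) unitUniform :=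
  (integrable_sub_sq (by rwa [quantileCoupling_map_fst]) (by rwa [quantileCoupling_map_snd]) :
    Integrable _ (quantileCoupling ν₁ ν₂)).comp_aemeasurable aemeasurable_quantile_prodMk

lemma W2sq_eq_integral_quantile :
    W2sq ν₁ ν₂ = ∫ t, (quantile ν₁ t - quantile ν₂ t) ^ 2 ∂unitUniform := by
  have hleast : IsLeast {c | ∃ π : Measure (ℝ × ℝ), IsProbabilityMeasure π ∧
      π.map Prod.fst = ν₁ ∧ π.map Prod.snd = ν₂ ∧ c = ∫ p, (p.1 - p.2) ^ 2 ∂π}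
      (∫ p, (p.1 - p.2) ^ 2 ∂(quantileCoupling ν₁ ν₂)) := by
    refine ⟨⟨quantileCoupling ν₁ ν₂, inferInstance, quantileCoupling_map_fst,
      quantileCoupling_map_snd, rfl⟩, ?_⟩
    rintro _ ⟨π, _, h₁, h₂, rfl⟩
    exact integral_sub_sq_quantileCoupling_le hm₁ hm₂ h₁ h₂
  rw [W2sq, hleast.csInf_eq, quantileCoupling, integral_map aemeasurable_quantile_prodMk
    (by fun_prop)]

end Optimality

open Finset in
lemma sum_sq_sub_mean_le {ι : Type*} (s : Finset ι) (a : ι → ℝ) (c : ℝ) :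
    ∑ i ∈ s, (a i - (#s : ℝ)⁻¹ * ∑ k ∈ s, a k) ^ 2 ≤ ∑ i ∈ s, (a i - c) ^ 2 := by
  set m := (#s : ℝ)⁻¹ * ∑ k ∈ s, a k
  have hcentered : ∑ i ∈ s, (a i - m) = 0 := by
    rcases s.eq_empty_or_nonempty with rfl | hs
    · simp
    · rw [sum_sub_distrib, sum_const, nsmul_eq_mul, mul_inv_cancel_left₀ (by positivity), sub_self]
  have hsplit : ∑ i ∈ s, (a i - c) ^ 2 =
      ∑ i ∈ s, (a i - m) ^ 2 + 2 * (m - c) * ∑ i ∈ s, (a i - m) + #s * (m - c) ^ 2 := by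
    rw [mul_sum, ← nsmul_eq_mul, ← sum_const, ← sum_add_distrib, ← sum_add_distrib]
    exact sum_congr rfl fun i _ => by ring
  rw [hsplit, hcentered]
  nlinarith [sq_nonneg (m - c)]

theorem stmt_1_general {J : ℕ} (μ : Fin J → Measure ℝ) (μB : Measure ℝ)
    [∀ j, IsProbabilityMeasure (μ j)] [IsProbabilityMeasure μB]
    (hmom : ∀ j, Integrable (fun x => x ^ 2) (μ j))
    (hmomB : Integrable (fun x => x ^ 2) μB)
    (hquant : ∀ t ∈ Set.Ioo (0 : ℝ) 1,
      quantile μB t = (J : ℝ)⁻¹ * ∑ k, quantile (μ k) t) :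
    ∀ η : Measure ℝ, IsProbabilityMeasure η → Integrable (fun x => x ^ 2) η →
      (J : ℝ)⁻¹ * ∑ j, W2sq (μ j) μB ≤ (J : ℝ)⁻¹ * ∑ j, W2sq (μ j) η := by
  intro η _ hmomη
  have hintB (j : Fin J) (_ : j ∈ Finset.univ) := integrable_quantile_sub_sq (hmom j) hmomB
  have hintη (j : Fin J) (_ : j ∈ Finset.univ) := integrable_quantile_sub_sq (hmom j) hmomη
  gcongr (J : ℝ)⁻¹ * ?_
  simp only [W2sq_eq_integral_quantile (hmom _) hmomB, W2sq_eq_integral_quantile (hmom _) hmomη]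
  rw [← integral_finsetSum _ hintB, ← integral_finsetSum _ hintη]
  refine integral_mono_ae (integrable_finsetSum _ hintB) (integrable_finsetSum _ hintη) ?_
  filter_upwards [ae_restrict_mem measurableSet_Ioo] with t ht
  rw [hquant t ht]
  simpa using sum_sq_sub_mean_le Finset.univ (fun k => quantile (μ k) t) (quantile η t)

/-- The measure μ_B whose quantile function is the average of the quantile functions
of μ₁,…,μ_J minimizes η ↦ (1/J)∑ⱼ W₂²(μⱼ, η). -/
theorem stmt_1 {J : ℕ} (hJ : 0 < J) (μ : Fin J → Measure ℝ) (μB : Measure ℝ)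
    [∀ j, IsProbabilityMeasure (μ j)] [IsProbabilityMeasure μB]
    (hmom : ∀ j, Integrable (fun x => x ^ 2) (μ j))
    (hmomB : Integrable (fun x => x ^ 2) μB)
    (hquant : ∀ t ∈ Set.Ioo (0 : ℝ) 1,
      quantile μB t = (J : ℝ)⁻¹ * ∑ k, quantile (μ k) t) :
    ∀ η : Measure ℝ, IsProbabilityMeasure η → Integrable (fun x => x ^ 2) η →
      (J : ℝ)⁻¹ * ∑ j, W2sq (μ j) μB ≤ (J : ℝ)⁻¹ * ∑ j, W2sq (μ j) η :=
  stmt_1_general μ μB hmom hmomB hquant
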